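/- Let I = (G,q,c) be an instance of Max E2Lin(q) such that φ_G ≥ φ for some φ > 0 and OPT(I) < 1 − ρ for some 0 < ρ ≤ 1. Then every nonempty subset S' of the vertex set of the label-extended graph G_I with μ_{G_I}(S') ≤ μ_{G_I}/q satisfies φ_{G_I}(S') ≥ ρφ/(6q); that is, φ_{G_I}(q) ≥ ρφ/(6q). -/

import Mathlib

open scoped Classical
open Matrix

noncomputable section

namespace Sublinear

variable {V : Type*}

/-- The degree `d(v)` of a vertex, as a real number. -/
def deg [Fintype V] (G : SimpleGraph V) (v : V) : ℝ :=
  ((Finset.univ.filter fun u => G.Adj v u).card : ℝ)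

/-- The volume `μ_G(S)` of a set of vertices. -/
def vol [Fintype V] (G : SimpleGraph V) (S : Set V) : ℝ :=
  ∑ v ∈ Finset.univ.filter (fun v => v ∈ S), deg G v

/-- The number of ordered adjacent pairs `(u,v)` with `u ∈ S`, `v ∈ T`.
For disjoint `S`, `T` this equals the number `e_G(S,T)` of edges between `S` and `T`. -/
def eB [Fintype V] (G : SimpleGraph V) (S T : Set V) : ℝ :=
  (((Finset.univ : Finset (V × V)).filter
      fun p => p.1 ∈ S ∧ p.2 ∈ T ∧ G.Adj p.1 p.2).card : ℝ)

/-- The number `e_G(S)` of edges with both endpoints in `S`. -/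
def eIn [Fintype V] (G : SimpleGraph V) (S : Set V) : ℝ := eB G S S / 2

/-- The conductance `φ_G(S)` of a set of vertices. -/
def cond [Fintype V] (G : SimpleGraph V) (S : Set V) : ℝ :=
  eB G S Sᶜ / vol G S

/-- The conductance `φ_G` of the graph: the minimum of `φ_G(S)` over nonempty `S`
with `μ_G(S) ≤ μ_G/2`. -/
def conductance [Fintype V] (G : SimpleGraph V) : ℝ :=
  sInf {x | ∃ S : Set V, S.Nonempty ∧ vol G S ≤ vol G Set.univ / 2 ∧ x = cond G S}

/-- The label-extended graph `G_I` of a Max E2Lin(q) instance `I = (G, q, c)`: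
vertices are pairs `(u,i)` with `u` a vertex of `G` and `i ∈ Z_q`, and `(u,i)` is
adjacent to `(v,j)` iff `{u,v}` is an edge of `G` and `j = i + c u v`. -/
def labelExt {V : Type*} (G : SimpleGraph V) {q : ℕ} (c : V → V → ZMod q)
    (hc : ∀ u v, G.Adj u v → c v u = -c u v) : SimpleGraph (V × ZMod q) where
  Adj p p' := G.Adj p.1 p'.1 ∧ p'.2 = p.2 + c p.1 p'.1
  symm := by
    constructor
    rintro ⟨u, i⟩ ⟨v, j⟩ ⟨hadj, hj⟩
    refine ⟨hadj.symm, ?_⟩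
    simp only at hj ⊢
    rw [hc u v hadj, hj]
    ring
  loopless := by
    constructor
    rintro ⟨u, i⟩ ⟨hadj, _⟩
    exact G.loopless.irrefl u hadj

/-- The fraction of the edges of `G` that are satisfied by the assignment `ψ`
in the Max E2Lin(q) instance `(G, q, c)`: an edge `{u,v}` is satisfied if
`ψ u - ψ v = c u v`. -/
def satFrac [Fintype V] (G : SimpleGraph V) {q : ℕ} (c : V → V → ZMod q)
    (ψ : V → ZMod q) : ℝ :=
  (((Finset.univ : Finset (V × V)).filter
      fun p => G.Adj p.1 p.2 ∧ ψ p.1 - ψ p.2 = c p.1 p.2).card : ℝ)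
    / eB G Set.univ Set.univ

/-!
Let `s u` be the number of labels `i` with `(u, i) ∈ S'`. An edge of `G` leaving `{s ≥ k}` lifts
to an edge of `G_I` leaving `S'`, so the expansion of `G` bounds the cut of `S'` below by
`φ · vol {s ≥ 1}` when that set is small, and by `φ · vol {s = 0}` and `φ · vol {s ≥ 2}`
otherwise. In the latter case the labels of the vertices with `s u = 1` form an assignment
violated by more than a `ρ`-fraction of the edges, and a violated edge either touches a vertex
with `s u ≠ 1` or lifts to an edge of `G_I` leaving `S'`.
-/

section Graph

variable [Fintype V] (G : SimpleGraph V)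

lemma deg_nonneg (v : V) : 0 ≤ deg G v := Nat.cast_nonneg _

lemma vol_nonneg (S : Set V) : 0 ≤ vol G S := Finset.sum_nonneg fun v _ => deg_nonneg G v

lemma eB_nonneg (S T : Set V) : 0 ≤ eB G S T := Nat.cast_nonneg _

lemma vol_pos (hdeg : ∀ v, 1 ≤ deg G v) {S : Set V} (hS : S.Nonempty) : 0 < vol G S :=
  let ⟨v, hv⟩ := hS
  zero_lt_one.trans_le <| (hdeg v).trans <|
    Finset.single_le_sum (fun u _ => deg_nonneg G u) (by simpa using hv)

lemma vol_mono {S T : Set V} (h : S ⊆ T) : vol G S ≤ vol G T :=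
  Finset.sum_le_sum_of_subset_of_nonneg
    (Finset.monotone_filter_right _ fun _ _ hv => h hv) fun v _ _ => deg_nonneg G v

lemma vol_union_le (S T : Set V) : vol G (S ∪ T) ≤ vol G S + vol G T := by
  simp only [vol, Finset.sum_filter, ← Finset.sum_add_distrib]
  refine Finset.sum_le_sum fun v _ => ?_
  have := deg_nonneg G v
  split_ifs <;> simp_all

lemma vol_add_vol_compl (S : Set V) : vol G S + vol G Sᶜ = vol G Set.univ := by
  simpa [vol] using Finset.sum_filter_add_sum_filter_not Finset.univ (· ∈ S) (deg G)

lemma eB_comm (S T : Set V) : eB G S T = eB G T S := by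
  unfold eB
  congr 1
  refine Finset.card_equiv (Equiv.prodComm V V) fun p => ?_
  simp only [Finset.mem_filter, Finset.mem_univ, true_and, Equiv.prodComm_apply, Prod.fst_swap,
    Prod.snd_swap]
  exact ⟨fun ⟨h1, h2, h⟩ => ⟨h2, h1, h.symm⟩, fun ⟨h1, h2, h⟩ => ⟨h2, h1, h.symm⟩⟩

lemma eB_mono_right (S : Set V) {T T' : Set V} (h : T ⊆ T') : eB G S T ≤ eB G S T' := by
  unfold eB
  gcongr

lemma eB_univ_right (S : Set V) : eB G S Set.univ = vol G S := by
  unfold eB vol deg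
  rw [Finset.card_filter, Finset.sum_filter, Nat.cast_sum, Fintype.sum_prod_type]
  refine Finset.sum_congr rfl fun u _ => ?_
  by_cases hu : u ∈ S <;> simp [hu]

lemma eB_le_vol (S T : Set V) : eB G S T ≤ vol G S :=
  (eB_mono_right G S (Set.subset_univ T)).trans_eq (eB_univ_right G S)

lemma cond_le_one (S : Set V) : cond G S ≤ 1 :=
  div_le_one_of_le₀ (eB_le_vol G S Sᶜ) (vol_nonneg G S)

lemma conductance_le_cond {S : Set V} (hS : S.Nonempty) (hvol : vol G S ≤ vol G Set.univ / 2) :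
    conductance G ≤ cond G S := by
  refine csInf_le ⟨0, ?_⟩ ⟨S, hS, hvol, rfl⟩
  rintro x ⟨T, -, -, rfl⟩
  exact div_nonneg (eB_nonneg G T Tᶜ) (vol_nonneg G T)

/-- A vertex of minimum degree is no heavier than any of its neighbours. -/
lemma exists_two_mul_deg_le_vol_univ [Nonempty V] : ∃ v, 2 * deg G v ≤ vol G Set.univ := by
  obtain ⟨v, hv⟩ := Finite.exists_min (deg G)
  refine ⟨v, ?_⟩
  by_cases hw : ∃ w, G.Adj v w
  · obtain ⟨w, hvw⟩ := hw
    have hpair : deg G v + deg G w ≤ vol G Set.univ := by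
      rw [← Finset.sum_pair (G.ne_of_adj hvw)]
      exact Finset.sum_le_sum_of_subset_of_nonneg (by intro u; simp)
        fun u _ _ => deg_nonneg G u
    linarith [hv w]
  · push Not at hw
    have : deg G v = 0 := by simp [deg, hw]
    rw [this, mul_zero]
    exact vol_nonneg G _

lemma conductance_le_one [Nonempty V] : conductance G ≤ 1 := by
  obtain ⟨v, hv⟩ := exists_two_mul_deg_le_vol_univ G
  have hvol : vol G {v} = deg G v := by simp [vol, Finset.sum_filter]
  exact (conductance_le_cond G (Set.singleton_nonempty v) (by linarith)).trans (cond_le_one G _)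

lemma mul_vol_le_eB_compl {φ : ℝ} (hφ : φ ≤ conductance G) {S : Set V}
    (hvol : vol G S ≤ vol G Set.univ / 2) : φ * vol G S ≤ eB G S Sᶜ := by
  rcases (vol_nonneg G S).eq_or_lt with h0 | hpos
  · rw [← h0, mul_zero]; exact eB_nonneg G S Sᶜ
  have hS : S.Nonempty := Set.nonempty_iff_ne_empty.mpr <| by rintro rfl; simp [vol] at hpos
  exact (le_div_iff₀ hpos).mp (hφ.trans (conductance_le_cond G hS hvol))

variable {q : ℕ} (c : V → V → ZMod q)

/-- When `G` has no edges, `satFrac` is `0 / 0 = 0` and both sides vanish. -/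
lemma card_unsat_eq (ψ : V → ZMod q) :
    ((Finset.univ.filter fun p : V × V => G.Adj p.1 p.2 ∧ ¬ψ p.1 - ψ p.2 = c p.1 p.2).card : ℝ) =
      (1 - satFrac G c ψ) * vol G Set.univ := by
  have hsplit := Finset.card_filter_add_card_filter_not (s := Finset.univ.filter fun p : V × V =>
    G.Adj p.1 p.2) fun p => ψ p.1 - ψ p.2 = c p.1 p.2
  simp only [Finset.filter_filter] at hsplit
  have hadj : ((Finset.univ.filter fun p : V × V => G.Adj p.1 p.2).card : ℝ) = vol G Set.univ := by
    rw [← eB_univ_right]; simp [eB]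
  have hle := hadj ▸ Nat.cast_le (α := ℝ).mpr (hsplit ▸ Nat.le_add_left _ _)
  have hsum := congrArg (Nat.cast (R := ℝ)) hsplit
  push_cast at hsum
  rw [satFrac, eB_univ_right]
  rcases eq_or_ne (vol G Set.univ) 0 with h0 | hμ
  · rw [h0, mul_zero]
    exact le_antisymm (h0 ▸ hle) (Nat.cast_nonneg _)
  · field_simp
    linarith

end Graph

section Fiber

variable {α : Type*} [Fintype α]

def fiber (S : Set (V × α)) (u : V) : Finset α := Finset.univ.filter fun i => (u, i) ∈ S

def fiberLevel (S : Set (V × α)) (k : ℕ) : Set V := {u | k ≤ (fiber S u).card}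

@[simp]
lemma mem_fiber {S : Set (V × α)} {u : V} {i : α} : i ∈ fiber S u ↔ (u, i) ∈ S := by
  simp [fiber]

lemma exists_fiber_eq_singleton_of_card_eq_one [Nonempty α] (S : Set (V × α)) :
    ∃ ℓ : V → α, ∀ u, (fiber S u).card = 1 → fiber S u = {ℓ u} := by
  choose ℓ hℓ using fun u => (em ((fiber S u).card = 1)).elim
    (fun h => (Finset.card_eq_one.mp h).imp fun _ ha _ => ha)
    (fun h => ⟨Classical.arbitrary α, fun h' => absurd h' h⟩)
  exact ⟨ℓ, hℓ⟩

end Fiber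

section LabelExt

variable [Fintype V] (G : SimpleGraph V) {q : ℕ} [NeZero q] (c : V → V → ZMod q)
  (hc : ∀ u v, G.Adj u v → c v u = -c u v) (S' : Set (V × ZMod q))

lemma deg_labelExt (u : V) (i : ZMod q) : deg (labelExt G c hc) (u, i) = deg G u := by
  unfold deg
  congr 1
  refine Finset.card_nbij' Prod.fst (fun v => (v, i + c u v)) ?_ ?_ ?_ fun _ _ => rfl <;>
    intro p hp <;> simp only [Finset.mem_coe, Finset.mem_filter, Finset.mem_univ, true_and] at hp ⊢
  · exact hp.1
  · exact ⟨hp, rfl⟩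
  · exact Prod.ext rfl hp.2.symm

lemma vol_labelExt :
    vol (labelExt G c hc) S' = ∑ u, ((fiber S' u).card : ℝ) * deg G u := by
  unfold vol
  rw [Finset.sum_filter, Fintype.sum_prod_type]
  refine Finset.sum_congr rfl fun u _ => ?_
  simp_rw [deg_labelExt, ← Finset.sum_filter, Finset.sum_const, nsmul_eq_mul]
  rfl

lemma vol_labelExt_univ : vol (labelExt G c hc) Set.univ = q * vol G Set.univ := by
  rw [vol_labelExt]
  simp [vol, fiber, Finset.mul_sum]

lemma natCast_mul_vol_fiberLevel_le (k : ℕ) :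
    k * vol G (fiberLevel S' k) ≤ vol (labelExt G c hc) S' := by
  rw [vol_labelExt, vol, Finset.sum_filter, Finset.mul_sum]
  refine Finset.sum_le_sum fun u _ => ?_
  split_ifs with h
  · exact mul_le_mul_of_nonneg_right (by exact_mod_cast h) (deg_nonneg G u)
  · rw [mul_zero]; exact mul_nonneg (Nat.cast_nonneg _) (deg_nonneg G u)

lemma vol_labelExt_le : vol (labelExt G c hc) S' ≤ q * vol G (fiberLevel S' 1) := by
  rw [vol_labelExt, vol, Finset.sum_filter, Finset.mul_sum]
  refine Finset.sum_le_sum fun u _ => ?_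
  split_ifs with h
  · refine mul_le_mul_of_nonneg_right ?_ (deg_nonneg G u)
    exact_mod_cast (Finset.card_filter_le _ _).trans_eq (ZMod.card q)
  · simp [Nat.lt_one_iff.mp (not_le.mp h)]

lemma card_le_eB_labelExt (E : Finset (V × V))
    (hE : ∀ p ∈ E, G.Adj p.1 p.2 ∧ ∃ i, (p.1, i) ∈ S' ∧ (p.2, i + c p.1 p.2) ∉ S') :
    (E.card : ℝ) ≤ eB (labelExt G c hc) S' S'ᶜ := by
  unfold eB
  refine Nat.cast_le.mpr (Finset.card_le_card_of_surjOn (fun x => (x.1.1, x.2.1)) ?_)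
  intro p hp
  obtain ⟨hadj, i, hi, hi'⟩ := hE p hp
  exact ⟨((p.1, i), (p.2, i + c p.1 p.2)), by simpa [labelExt] using ⟨hi, hi', hadj⟩, rfl⟩

/-- Unless an edge of `G_I` leaves `S'`, translation by `c u v` injects the fibre over `u`
into the fibre over `v`. -/
lemma eB_fiberLevel_le (k : ℕ) :
    eB G (fiberLevel S' k) (fiberLevel S' k)ᶜ ≤ eB (labelExt G c hc) S' S'ᶜ := by
  refine card_le_eB_labelExt G c hc S' _ fun p hp => ?_
  simp only [Finset.mem_filter, Finset.mem_univ, true_and, Set.mem_compl_iff, fiberLevel,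
    Set.mem_ofPred_eq] at hp
  obtain ⟨hu, hv, hadj⟩ := hp
  refine ⟨hadj, ?_⟩
  by_contra! hshift
  refine hv (hu.trans (Finset.card_le_card_of_injOn (· + c p.1 p.2) ?_ ?_))
  · intro i hi
    simpa using hshift i (mem_fiber.mp hi)
  · exact (add_left_injective _).injOn

lemma card_unsat_singleton_le (ℓ : V → ZMod q)
    (hℓ : ∀ u, (fiber S' u).card = 1 → fiber S' u = {ℓ u}) :
    ((Finset.univ.filter fun p : V × V => (fiber S' p.1).card = 1 ∧ (fiber S' p.2).card = 1 ∧
        G.Adj p.1 p.2 ∧ ℓ p.2 ≠ ℓ p.1 + c p.1 p.2).card : ℝ) ≤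
      eB (labelExt G c hc) S' S'ᶜ := by
  refine card_le_eB_labelExt G c hc S' _ fun p hp => ?_
  simp only [Finset.mem_filter, Finset.mem_univ, true_and] at hp
  obtain ⟨h1, h2, hadj, hne⟩ := hp
  refine ⟨hadj, ℓ p.1, mem_fiber.mp (by simp [hℓ _ h1]), fun hmem => hne ?_⟩
  have := mem_fiber.mpr hmem
  rw [hℓ _ h2, Finset.mem_singleton] at this
  exact this.symm

lemma card_unsat_le (ℓ : V → ZMod q) (hℓ : ∀ u, (fiber S' u).card = 1 → fiber S' u = {ℓ u}) :
    ((Finset.univ.filter fun p : V × V => G.Adj p.1 p.2 ∧ ℓ p.2 ≠ ℓ p.1 + c p.1 p.2).card : ℝ) ≤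
      2 * vol G {u | (fiber S' u).card ≠ 1} + eB (labelExt G c hc) S' S'ᶜ := by
  set B := {u | (fiber S' u).card ≠ 1}
  have hsub : (Finset.univ.filter fun p : V × V => G.Adj p.1 p.2 ∧ ℓ p.2 ≠ ℓ p.1 + c p.1 p.2) ⊆
      (Finset.univ.filter fun p : V × V => p.1 ∈ B ∧ p.2 ∈ Set.univ ∧ G.Adj p.1 p.2) ∪
      (Finset.univ.filter fun p : V × V => p.1 ∈ Set.univ ∧ p.2 ∈ B ∧ G.Adj p.1 p.2) ∪
      (Finset.univ.filter fun p : V × V => (fiber S' p.1).card = 1 ∧ (fiber S' p.2).card = 1 ∧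
        G.Adj p.1 p.2 ∧ ℓ p.2 ≠ ℓ p.1 + c p.1 p.2) := by
    intro p hp
    simp only [Finset.mem_filter, Finset.mem_univ, true_and, Finset.mem_union, Set.mem_univ,
      B, Set.mem_ofPred_eq] at hp ⊢
    tauto
  have hcard := (Nat.cast_le (α := ℝ)).mpr <| (Finset.card_le_card hsub).trans <|
    (Finset.card_union_le _ _).trans (Nat.add_le_add_right (Finset.card_union_le _ _) _)
  rw [Nat.cast_add, Nat.cast_add] at hcard
  calc _ ≤ eB G B Set.univ + eB G Set.univ B + ((Finset.univ.filter fun p : V × V =>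
          (fiber S' p.1).card = 1 ∧ (fiber S' p.2).card = 1 ∧ G.Adj p.1 p.2 ∧
            ℓ p.2 ≠ ℓ p.1 + c p.1 p.2).card : ℝ) := by
        -- the filters above differ from those of `eB` only in their `Decidable` instances
        convert hcard using 3 <;> first | rfl | (unfold eB; congr)
    _ ≤ _ := by
        rw [eB_comm G Set.univ, eB_univ_right]
        linarith [card_unsat_singleton_le G c hc S' ℓ hℓ]

/-- The violated assignment is `-ℓ`: `G_I` joins `(u, i)` to `(v, i + c u v)`, whereas `ψ`
satisfies `{u, v}` when `ψ u - ψ v = c u v`. -/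
lemma mul_vol_univ_le {ρ : ℝ} (hopt : ∀ ψ : V → ZMod q, satFrac G c ψ < 1 - ρ) :
    ρ * vol G Set.univ ≤ 2 * (vol G (fiberLevel S' 1)ᶜ + vol G (fiberLevel S' 2)) +
      eB (labelExt G c hc) S' S'ᶜ := by
  obtain ⟨ℓ, hℓ⟩ := exists_fiber_eq_singleton_of_card_eq_one S'
  have hB : {u | (fiber S' u).card ≠ 1} ⊆ (fiberLevel S' 1)ᶜ ∪ fiberLevel S' 2 := by
    intro u hu
    simp only [Set.mem_ofPred_eq, Set.mem_union, Set.mem_compl_iff, fiberLevel] at hu ⊢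
    omega
  calc ρ * vol G Set.univ ≤ (1 - satFrac G c (-ℓ)) * vol G Set.univ :=
        mul_le_mul_of_nonneg_right (by linarith [hopt (-ℓ)]) (vol_nonneg G _)
    _ = ((Finset.univ.filter fun p : V × V => G.Adj p.1 p.2 ∧ ℓ p.2 ≠ ℓ p.1 + c p.1 p.2).card :
          ℝ) := by
        rw [← card_unsat_eq]
        simp only [Pi.neg_apply, neg_sub_neg, sub_eq_iff_eq_add', ne_eq]
    _ ≤ 2 * vol G {u | (fiber S' u).card ≠ 1} + eB (labelExt G c hc) S' S'ᶜ :=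
        card_unsat_le G c hc S' ℓ hℓ
    _ ≤ _ := by
        gcongr
        exact (vol_mono G hB).trans (vol_union_le G _ _)

lemma mul_vol_le_eB_labelExt_of_vol_le_half {φ ρ : ℝ} (hφ : 0 ≤ φ) (hcond : φ ≤ conductance G)
    (hρ : ρ ≤ 1) (hA : vol G (fiberLevel S' 1) ≤ vol G Set.univ / 2) :
    ρ * φ * vol (labelExt G c hc) S' ≤ q * eB (labelExt G c hc) S' S'ᶜ :=
  calc ρ * φ * vol (labelExt G c hc) S' ≤ φ * vol (labelExt G c hc) S' := by
        rw [mul_assoc]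
        exact mul_le_of_le_one_left (mul_nonneg hφ (vol_nonneg _ S')) hρ
    _ ≤ φ * (q * vol G (fiberLevel S' 1)) := by gcongr; exact vol_labelExt_le G c hc S'
    _ = q * (φ * vol G (fiberLevel S' 1)) := by ring
    _ ≤ q * eB (labelExt G c hc) S' S'ᶜ := by
        gcongr
        exact (mul_vol_le_eB_compl G hcond hA).trans (eB_fiberLevel_le G c hc S' 1)

lemma mul_vol_le_eB_labelExt_of_half_lt_vol [Nonempty V] {φ ρ : ℝ} (hφ : 0 ≤ φ)
    (hcond : φ ≤ conductance G) (hρ : 0 ≤ ρ) (hopt : ∀ ψ : V → ZMod q, satFrac G c ψ < 1 - ρ)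
    (hS' : vol (labelExt G c hc) S' ≤ vol G Set.univ)
    (hA : vol G Set.univ / 2 < vol G (fiberLevel S' 1)) :
    ρ * φ * vol (labelExt G c hc) S' ≤ 5 * eB (labelExt G c hc) S' S'ᶜ := by
  have hAc := mul_vol_le_eB_compl G hcond (S := (fiberLevel S' 1)ᶜ)
    (by linarith [vol_add_vol_compl G (fiberLevel S' 1)])
  rw [compl_compl, eB_comm] at hAc
  have hD := mul_vol_le_eB_compl G hcond (S := fiberLevel S' 2)
    (by linarith [Nat.cast_ofNat (R := ℝ) (n := 2) ▸ natCast_mul_vol_fiberLevel_le G c hc S' 2])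
  have hφ1 : φ ≤ 1 := hcond.trans (conductance_le_one G)
  have hcut := eB_nonneg (labelExt G c hc) S' S'ᶜ
  calc ρ * φ * vol (labelExt G c hc) S' ≤ ρ * φ * vol G Set.univ := by gcongr
    _ = φ * (ρ * vol G Set.univ) := by ring
    _ ≤ φ * (2 * (vol G (fiberLevel S' 1)ᶜ + vol G (fiberLevel S' 2)) +
          eB (labelExt G c hc) S' S'ᶜ) := by
        gcongr
        exact mul_vol_univ_le G c hc S' hopt
    _ ≤ 5 * eB (labelExt G c hc) S' S'ᶜ := by
        linarith [mul_le_of_le_one_left hcut hφ1, eB_fiberLevel_le G c hc S' 1,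
          eB_fiberLevel_le G c hc S' 2]

end LabelExt

theorem e2lin_soundness_small_set_expansion_general
    {V : Type*} [Fintype V] (G : SimpleGraph V)
    (hdeg : ∀ v, 1 ≤ deg G v)
    (q : ℕ) [NeZero q]
    (c : V → V → ZMod q) (hc : ∀ u v, G.Adj u v → c v u = -c u v)
    (φ ρ : ℝ) (hφ : 0 < φ) (hcond : φ ≤ conductance G)
    (hρ0 : 0 < ρ) (hρ1 : ρ ≤ 1)
    (hopt : ∀ ψ : V → ZMod q, satFrac G c ψ < 1 - ρ) :
    ∀ S' : Set (V × ZMod q), S'.Nonempty →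
      vol (labelExt G c hc) S' ≤ vol (labelExt G c hc) Set.univ / q →
      ρ * φ / (6 * q) ≤ cond (labelExt G c hc) S' := by
  intro S' hS' hsmall
  have : Nonempty V := ⟨hS'.some.1⟩
  have hq : (1 : ℝ) ≤ q := Nat.one_le_cast.mpr NeZero.one_le
  have hσ : 0 < vol (labelExt G c hc) S' :=
    vol_pos _ (fun ⟨u, i⟩ => (deg_labelExt G c hc u i).symm ▸ hdeg u) hS'
  have hσμ : vol (labelExt G c hc) S' ≤ vol G Set.univ := by
    rwa [vol_labelExt_univ, mul_div_cancel_left₀ _ (by linarith)] at hsmall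
  have hcut := eB_nonneg (labelExt G c hc) S' S'ᶜ
  rw [cond, div_le_div_iff₀ (by positivity) hσ]
  rcases le_or_gt (vol G (fiberLevel S' 1)) (vol G Set.univ / 2) with hA | hA
  · linarith [mul_nonneg (zero_le_one.trans hq) hcut,
      mul_vol_le_eB_labelExt_of_vol_le_half G c hc S' hφ.le hcond hρ1 hA]
  · linarith [mul_le_mul_of_nonneg_right hq hcut,
      mul_vol_le_eB_labelExt_of_half_lt_vol G c hc S' hφ.le hcond hρ0.le hopt hσμ hA]

/-- If `I = (G,q,c)` is a Max E2Lin(q) instance with `φ_G ≥ φ > 0`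
and `OPT(I) < 1 - ρ` for some `0 < ρ ≤ 1`, then every nonempty set `S'` of
vertices of the label-extended graph `G_I` with `μ_{G_I}(S') ≤ μ_{G_I}/q` has
conductance at least `ρφ/(6q)`; that is, `φ_{G_I}(q) ≥ ρφ/(6q)`. -/
theorem e2lin_soundness_small_set_expansion
    {V : Type*} [Fintype V] (G : SimpleGraph V)
    (hdeg : ∀ v, 1 ≤ deg G v)
    (q : ℕ) (hq : 2 ≤ q) [NeZero q]
    (c : V → V → ZMod q) (hc : ∀ u v, G.Adj u v → c v u = -c u v)
    (φ ρ : ℝ) (hφ : 0 < φ) (hcond : φ ≤ conductance G)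
    (hρ0 : 0 < ρ) (hρ1 : ρ ≤ 1)
    (hopt : ∀ ψ : V → ZMod q, satFrac G c ψ < 1 - ρ) :
    ∀ S' : Set (V × ZMod q), S'.Nonempty →
      vol (labelExt G c hc) S' ≤ vol (labelExt G c hc) Set.univ / q →
      ρ * φ / (6 * q) ≤ cond (labelExt G c hc) S' :=
  e2lin_soundness_small_set_expansion_general G hdeg q c hc φ ρ hφ hcond hρ0 hρ1 hopt

end Sublinear
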